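/- Let k ≥ 1 be an integer. For every integer j with 2k+2 ≤ j ≤ 2k+4, the number of digitally convex sets of the k-th power of the cycle on j vertices equals 2 + j(j − 2k − 1), i.e., n_D(C_j^k) = 2 + j(j−2k−1). -/
import Mathlib


open SimpleGraph

/-- `N[S]`: the union of closed neighbourhoods of the vertices of `S`. -/
def closedNbhd {V : Type*} (G : SimpleGraph V) (S : Set V) : Set V :=
  ⋃ v ∈ S, insert v (G.neighborSet v)

/-- A set `S` is digitally convex in `G` if every vertex `v` with `N[v] ⊆ N[S]`
belongs to `S`. -/
def DigConvex {V : Type*} (G : SimpleGraph V) (S : Set V) : Prop :=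
  ∀ v : V, insert v (G.neighborSet v) ⊆ closedNbhd G S → v ∈ S

/-- `n_D(G)`: the number of digitally convex sets of `G`. -/
noncomputable def nD {V : Type*} (G : SimpleGraph V) : ℕ :=
  Nat.card {S : Set V // DigConvex G S}

/-- The `k`-th power `C_n^k` of the cycle `C_n`: distinct vertices `i j : ZMod n`
are adjacent iff `j - i ∈ {±1, ±2, …, ±k}`. -/
def cyclePow (n k : ℕ) : SimpleGraph (ZMod n) :=
  SimpleGraph.fromRel (fun i j => ∃ t : ℕ, 1 ≤ t ∧ t ≤ k ∧ j = i + (t : ZMod n))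

namespace NDProof

def inD (n k : ℕ) (x : ZMod n) : Prop :=
  ∃ t : ℕ, t ≤ k ∧ (x = (t : ZMod n) ∨ x = -(t : ZMod n))

lemma closed_eq (n k : ℕ) (v : ZMod n) :
    insert v ((cyclePow n k).neighborSet v) = {x | inD n k (x - v)} := by
  ext x
  simp only [Set.mem_insert_iff, mem_neighborSet, cyclePow, fromRel_adj, Set.mem_setOf_eq]
  constructor
  · rintro (rfl | ⟨hne, ⟨t, h1, h2, hx⟩ | ⟨t, h1, h2, hx⟩⟩)
    · exact ⟨0, Nat.zero_le _, Or.inl (by simp)⟩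
    · exact ⟨t, h2, Or.inl (by rw [hx]; ring)⟩
    · exact ⟨t, h2, Or.inr (by rw [hx]; ring)⟩
  · rintro ⟨t, ht, hx | hx⟩
    · rcases eq_or_ne x v with rfl | hne
      · exact Or.inl rfl
      · have h1 : 1 ≤ t := by
          rcases Nat.eq_zero_or_pos t with rfl | h
          · exact absurd (by rwa [Nat.cast_zero, sub_eq_zero] at hx) hne
          · exact h
        exact Or.inr ⟨hne.symm, Or.inl ⟨t, h1, ht, by linear_combination hx⟩⟩
    · rcases eq_or_ne x v with rfl | hne
      · exact Or.inl rfl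
      · have h1 : 1 ≤ t := by
          rcases Nat.eq_zero_or_pos t with rfl | h
          · refine absurd ?_ hne
            rw [Nat.cast_zero, neg_zero, sub_eq_zero] at hx; exact hx
          · exact h
        exact Or.inr ⟨hne.symm, Or.inr ⟨t, h1, ht, by linear_combination -hx⟩⟩

lemma closedNbhd_eq (n k : ℕ) (S : Set (ZMod n)) :
    closedNbhd (cyclePow n k) S = {x | ∃ s ∈ S, inD n k (x - s)} := by
  ext x
  simp only [closedNbhd, closed_eq, Set.mem_iUnion, Set.mem_setOf_eq, exists_prop]

lemma digconvex_iff (n k : ℕ) (S : Set (ZMod n)) :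
    DigConvex (cyclePow n k) S ↔
      ∀ v, v ∉ S → ∃ w, inD n k (w - v) ∧ ∀ s ∈ S, ¬ inD n k (w - s) := by
  unfold DigConvex
  simp only [closed_eq, closedNbhd_eq]
  constructor
  · intro h v hv
    by_contra hc
    push_neg at hc
    apply hv
    apply h v
    intro w hw
    exact hc w hw
  · intro h v hsub
    by_contra hv
    obtain ⟨w, hw1, hw2⟩ := h v hv
    obtain ⟨s, hs, hds⟩ := hsub hw1
    exact hw2 s hs hds

lemma cast_inj_of_lt {n a b : ℕ} (ha : a < n) (hb : b < n)
    (h : (a : ZMod n) = (b : ZMod n)) : a = b := by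
  have := congrArg ZMod.val h
  rwa [ZMod.val_natCast_of_lt ha, ZMod.val_natCast_of_lt hb] at this

lemma inD_val_iff {n k r : ℕ} (hn : n = 2*k+1+r) (hr1 : 1 ≤ r) (x : ZMod n) :
    inD n k x ↔ (x.val ≤ k ∨ k + r + 1 ≤ x.val) := by
  haveI : NeZero n := ⟨by omega⟩
  constructor
  · rintro ⟨t, ht, rfl | rfl⟩
    · left; rw [ZMod.val_natCast_of_lt (by omega)]; exact ht
    · rcases Nat.eq_zero_or_pos t with rfl | h1
      · left; simp
      · right
        have heq : -(t : ZMod n) = ((n - t : ℕ) : ZMod n) := by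
          rw [Nat.cast_sub (by omega : t ≤ n), ZMod.natCast_self]; ring
        rw [heq, ZMod.val_natCast_of_lt (by omega)]
        omega
  · intro h
    have hx : ((x.val : ℕ) : ZMod n) = x := ZMod.natCast_rightInverse x
    have hv : x.val < n := ZMod.val_lt x
    rcases h with h | h
    · exact ⟨x.val, h, Or.inl hx.symm⟩
    · refine ⟨n - x.val, by omega, Or.inr ?_⟩
      rw [Nat.cast_sub (le_of_lt hv), ZMod.natCast_self, hx]
      ring

lemma not_inD_iff {n k r : ℕ} (hn : n = 2*k+1+r) (hr1 : 1 ≤ r) (x : ZMod n) :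
    ¬ inD n k x ↔ (k + 1 ≤ x.val ∧ x.val ≤ k + r) := by
  haveI : NeZero n := ⟨by omega⟩
  have hv : x.val < n := ZMod.val_lt x
  rw [inD_val_iff hn hr1]
  omega

lemma not_inD_cast {n k r : ℕ} (hn : n = 2*k+1+r) (hr1 : 1 ≤ r) (hr3 : r ≤ 3) (hk : 1 ≤ k)
    {c : ℕ} (h1 : k + 1 ≤ c) (h2 : c ≤ k + r) : ¬ inD n k ((c : ℕ) : ZMod n) := by
  rw [not_inD_iff hn hr1, ZMod.val_natCast_of_lt (by omega)]
  omega

lemma not_inD_cases {n k r : ℕ} (hn : n = 2*k+1+r) (hr1 : 1 ≤ r) {x : ZMod n}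
    (h : ¬ inD n k x) : ∃ s, 1 ≤ s ∧ s ≤ r ∧ x = ((k + s : ℕ) : ZMod n) := by
  haveI : NeZero n := ⟨by omega⟩
  rw [not_inD_iff hn hr1] at h
  refine ⟨x.val - k, by omega, by omega, ?_⟩
  have hx : ((x.val : ℕ) : ZMod n) = x := ZMod.natCast_rightInverse x
  rw [show k + (x.val - k) = x.val from by omega, hx]

def run (n : ℕ) (a : ZMod n) (l : ℕ) : Set (ZMod n) :=
  {x | ∃ i, i < l ∧ x = a + (i : ZMod n)}

lemma empty_convex (n k : ℕ) : DigConvex (cyclePow n k) (∅ : Set (ZMod n)) := by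
  rw [digconvex_iff]
  intro v _
  exact ⟨v, ⟨0, Nat.zero_le _, Or.inl (by simp)⟩, by simp⟩

lemma univ_convex (n k : ℕ) : DigConvex (cyclePow n k) (Set.univ : Set (ZMod n)) :=
  fun v _ => Set.mem_univ v

lemma run_convex {n k r : ℕ} (hn : n = 2*k+1+r) (hk : 1 ≤ k) (hr1 : 1 ≤ r) (hr3 : r ≤ 3)
    (a : ZMod n) {l : ℕ} (hl1 : 1 ≤ l) (hlr : l ≤ r) :
    DigConvex (cyclePow n k) (run n a l) := by
  rw [digconvex_iff]
  intro v hv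
  have hgood : ∀ m : ℕ, l ≤ m → m ≤ r →
      ∀ s ∈ run n a l, ¬ inD n k (a + ((k+m : ℕ) : ZMod n) - s) := by
    rintro m hm1 hm2 s ⟨i, hi, rfl⟩
    have he : a + ((k+m : ℕ) : ZMod n) - (a + (i : ZMod n)) = ((k+m-i : ℕ) : ZMod n) := by
      rw [Nat.cast_sub (by omega : i ≤ k+m)]; push_cast; ring
    rw [he]
    exact not_inD_cast hn hr1 hr3 hk (by omega) (by omega)
  by_cases h0 : inD n k (a + ((k+l : ℕ) : ZMod n) - v)
  · exact ⟨_, h0, hgood l le_rfl hlr⟩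
  by_cases h1 : inD n k (a + ((k+r : ℕ) : ZMod n) - v)
  · exact ⟨_, h1, hgood r hlr le_rfl⟩
  exfalso
  obtain ⟨s, hs1, hs2, e0⟩ := not_inD_cases hn hr1 h0
  obtain ⟨s', hs1', hs2', e1⟩ := not_inD_cases hn hr1 h1
  have hsl : ¬ s ≤ l := by
    intro hsl
    apply hv
    refine ⟨l - s, by omega, ?_⟩
    have hls : ((l - s : ℕ) : ZMod n) = ((k+l : ℕ) : ZMod n) - ((k+s : ℕ) : ZMod n) := by
      rw [Nat.cast_sub hsl]; push_cast; ring
    rw [hls]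
    linear_combination -e0
  have key : ((r - l + s : ℕ) : ZMod n) = ((s' : ℕ) : ZMod n) := by
    have hc : ((r - l + s : ℕ) : ZMod n) = ((r : ℕ) : ZMod n) - (l : ZMod n) + (s : ZMod n) := by
      rw [Nat.cast_add, Nat.cast_sub hlr]
    rw [hc]
    push_cast at e0 e1 ⊢
    linear_combination e1 - e0
  have := cast_inj_of_lt (n := n) (by omega) (by omega) key
  omega

lemma run_one (n : ℕ) (b : ZMod n) : run n b 1 = {b} := by
  ext x
  simp only [run, Set.mem_setOf_eq, Set.mem_singleton_iff]
  constructor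
  · rintro ⟨i, hi, rfl⟩
    have : i = 0 := by omega
    subst this; simp
  · rintro rfl
    exact ⟨0, by omega, by simp⟩

lemma run_two (n : ℕ) (b : ZMod n) : run n b 2 = {b, b + 1} := by
  ext x
  simp only [run, Set.mem_setOf_eq, Set.mem_insert_iff, Set.mem_singleton_iff]
  constructor
  · rintro ⟨i, hi, rfl⟩
    interval_cases i
    · left; simp
    · right; simp
  · rintro (rfl | rfl)
    · exact ⟨0, by omega, by simp⟩
    · exact ⟨1, by omega, by simp⟩

lemma run_three (n : ℕ) (b : ZMod n) : run n b 3 = {b, b + 1, b + 2} := by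
  ext x
  simp only [run, Set.mem_setOf_eq, Set.mem_insert_iff, Set.mem_singleton_iff]
  constructor
  · rintro ⟨i, hi, rfl⟩
    interval_cases i
    · left; simp
    · right; left; simp
    · right; right; push_cast; ring_nf
  · rintro (rfl | rfl | rfl)
    · exact ⟨0, by omega, by simp⟩
    · exact ⟨1, by omega, by simp⟩
    · exact ⟨2, by omega, by push_cast; ring⟩

lemma convex_structure {n k r : ℕ} (hn : n = 2*k+1+r) (hk : 1 ≤ k) (hr1 : 1 ≤ r)
    (hr3 : r ≤ 3) {S : Set (ZMod n)} (hS : DigConvex (cyclePow n k) S) :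
    S = ∅ ∨ S = Set.univ ∨ ∃ a l, 1 ≤ l ∧ l ≤ r ∧ S = run n a l := by
  by_cases hE : S = ∅
  · exact Or.inl hE
  by_cases hU : S = Set.univ
  · exact Or.inr (Or.inl hU)
  refine Or.inr (Or.inr ?_)
  obtain ⟨v, hv⟩ := (Set.ne_univ_iff_exists_notMem S).1 hU
  obtain ⟨w, hw1, hw2⟩ := (digconvex_iff n k S).1 hS v hv
  set a := w - ((k+r : ℕ) : ZMod n) with ha
  have hsub : ∀ s ∈ S, ∃ i, i < r ∧ s = a + (i : ZMod n) := by
    intro s hs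
    obtain ⟨t, ht1, htr, he⟩ := not_inD_cases hn hr1 (hw2 s hs)
    refine ⟨r - t, by omega, ?_⟩
    have h2 : ((r - t : ℕ) : ZMod n) = ((k+r : ℕ) : ZMod n) - ((k+t : ℕ) : ZMod n) := by
      rw [Nat.cast_sub htr]; push_cast; ring
    rw [h2, ha]
    linear_combination -he
  obtain ⟨s0, hs0⟩ := Set.nonempty_iff_ne_empty.2 hE
  clear ha
  rcases (show r = 1 ∨ r = 2 ∨ r = 3 by omega) with rfl | rfl | rfl
  · -- r = 1 : S = {a}
    have hsub1 : ∀ s ∈ S, s = a := by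
      intro s hs
      obtain ⟨i, hi, rfl⟩ := hsub s hs
      have : i = 0 := by omega
      subst this; simp
    refine ⟨a, 1, le_rfl, le_rfl, ?_⟩
    rw [run_one]
    ext x
    constructor
    · intro hx; exact hsub1 x hx
    · rintro rfl
      rwa [← hsub1 s0 hs0]
  · -- r = 2
    have hsub2 : ∀ s ∈ S, s = a ∨ s = a + 1 := by
      intro s hs
      obtain ⟨i, hi, rfl⟩ := hsub s hs
      interval_cases i
      · left; simp
      · right; simp
    by_cases h0 : a ∈ S <;> by_cases h1 : a + 1 ∈ S
    · refine ⟨a, 2, by omega, by omega, ?_⟩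
      rw [run_two]
      ext x
      constructor
      · intro hx; exact hsub2 x hx
      · rintro (rfl | rfl) <;> assumption
    · refine ⟨a, 1, by omega, by omega, ?_⟩
      rw [run_one]
      ext x
      constructor
      · intro hx
        rcases hsub2 x hx with rfl | rfl
        · rfl
        · exact absurd hx h1
      · rintro rfl; exact h0
    · refine ⟨a + 1, 1, by omega, by omega, ?_⟩
      rw [run_one]
      ext x
      constructor
      · intro hx
        rcases hsub2 x hx with rfl | rfl
        · exact absurd hx h0
        · rfl
      · rintro rfl; exact h1
    · exfalso
      rcases hsub2 s0 hs0 with rfl | rfl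
      · exact h0 hs0
      · exact h1 hs0
  · -- r = 3
    have hsub3 : ∀ s ∈ S, s = a ∨ s = a + 1 ∨ s = a + 2 := by
      intro s hs
      obtain ⟨i, hi, rfl⟩ := hsub s hs
      interval_cases i
      · left; simp
      · right; left; simp
      · right; right; push_cast; ring_nf
    by_cases h0 : a ∈ S <;> by_cases h1 : a + 1 ∈ S <;> by_cases h2 : a + 2 ∈ S
    · -- TTT : run a 3
      refine ⟨a, 3, by omega, by omega, ?_⟩
      rw [run_three]
      ext x
      constructor
      · intro hx; exact hsub3 x hx
      · rintro (rfl | rfl | rfl) <;> assumption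
    · -- TTF : run a 2
      refine ⟨a, 2, by omega, by omega, ?_⟩
      rw [run_two]
      ext x
      constructor
      · intro hx
        rcases hsub3 x hx with rfl | rfl | rfl
        · exact Or.inl rfl
        · exact Or.inr rfl
        · exact absurd hx h2
      · rintro (rfl | rfl) <;> assumption
    · -- TFT : impossible (gap)
      exfalso
      obtain ⟨w', hw1', hw2'⟩ := (digconvex_iff n k S).1 hS (a + 1) h1
      obtain ⟨t1, ht11, ht13, e1⟩ := not_inD_cases hn hr1 (hw2' a h0)
      obtain ⟨t2, ht21, ht23, e2⟩ := not_inD_cases hn hr1 (hw2' (a + 2) h2)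
      have key : ((t1 : ℕ) : ZMod n) = ((t2 + 2 : ℕ) : ZMod n) := by
        push_cast at e1 e2 ⊢
        linear_combination e2 - e1
      have ht : t1 = t2 + 2 := cast_inj_of_lt (by omega) (by omega) key
      have emid : w' - (a + 1) = ((k + t2 + 1 : ℕ) : ZMod n) := by
        subst ht
        push_cast at e1 ⊢
        linear_combination e1
      rw [emid] at hw1'
      exact not_inD_cast hn hr1 hr3 hk (by omega) (by omega) hw1'
    · -- TFF : run a 1
      refine ⟨a, 1, by omega, by omega, ?_⟩
      rw [run_one]
      ext x
      constructor
      · intro hx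
        rcases hsub3 x hx with rfl | rfl | rfl
        · rfl
        · exact absurd hx h1
        · exact absurd hx h2
      · rintro rfl; exact h0
    · -- FTT : run (a+1) 2
      refine ⟨a + 1, 2, by omega, by omega, ?_⟩
      rw [run_two]
      ext x
      constructor
      · intro hx
        rcases hsub3 x hx with rfl | rfl | rfl
        · exact absurd hx h0
        · exact Or.inl rfl
        · right; rw [Set.mem_singleton_iff]; ring
      · rintro (rfl | rfl)
        · exact h1
        · have : a + 1 + 1 = a + 2 := by ring
          rw [this]; exact h2
    · -- FTF : run (a+1) 1
      refine ⟨a + 1, 1, by omega, by omega, ?_⟩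
      rw [run_one]
      ext x
      constructor
      · intro hx
        rcases hsub3 x hx with rfl | rfl | rfl
        · exact absurd hx h0
        · rfl
        · exact absurd hx h2
      · rintro rfl; exact h1
    · -- FFT : run (a+2) 1
      refine ⟨a + 2, 1, by omega, by omega, ?_⟩
      rw [run_one]
      ext x
      constructor
      · intro hx
        rcases hsub3 x hx with rfl | rfl | rfl
        · exact absurd hx h0
        · exact absurd hx h1
        · rfl
      · rintro rfl; exact h2
    · exfalso
      rcases hsub3 s0 hs0 with rfl | rfl | rfl
      · exact h0 hs0
      · exact h1 hs0
      · exact h2 hs0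

lemma ncard_run {n l : ℕ} (hl : l < n) (a : ZMod n) : (run n a l).ncard = l := by
  have himg : run n a l = (fun i : ℕ => a + (i : ZMod n)) '' ↑(Finset.range l) := by
    ext x
    simp only [run, Set.mem_setOf_eq, Set.mem_image, Finset.coe_range, Set.mem_Iio]
    constructor
    · rintro ⟨i, hi, rfl⟩; exact ⟨i, hi, rfl⟩
    · rintro ⟨i, hi, rfl⟩; exact ⟨i, hi, rfl⟩
  have hinj : Set.InjOn (fun i : ℕ => a + (i : ZMod n)) ↑(Finset.range l) := by
    intro i hi j hj h
    simp only [Finset.coe_range, Set.mem_Iio] at hi hj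
    have h2 : a + (i : ZMod n) = a + (j : ZMod n) := h
    exact cast_inj_of_lt (a := i) (b := j) (by omega) (by omega) (add_left_cancel h2)
  rw [himg, Set.ncard_image_of_injOn hinj, Set.ncard_coe_finset, Finset.card_range]

lemma mem_run_self {n l : ℕ} (hl : 1 ≤ l) (a : ZMod n) : a ∈ run n a l :=
  ⟨0, by omega, by simp⟩

lemma run_inj {n l : ℕ} (hl1 : 1 ≤ l) (h2l : 2*l ≤ n + 1) {a b : ZMod n}
    (h : run n a l = run n b l) : a = b := by
  obtain ⟨i, hi, hai⟩ := h ▸ mem_run_self hl1 a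
  obtain ⟨j, hj, hbj⟩ := h.symm ▸ mem_run_self hl1 b
  have hij : ((i + j : ℕ) : ZMod n) = ((0 : ℕ) : ZMod n) := by
    push_cast
    linear_combination -hai - hbj
  have := cast_inj_of_lt (by omega) (by omega) hij
  have hi0 : i = 0 := by omega
  subst hi0
  rw [hai]; simp

lemma nD_eq {n k r : ℕ} (hn : n = 2*k+1+r) (hk : 1 ≤ k) (hr1 : 1 ≤ r) (hr3 : r ≤ 3) :
    nD (cyclePow n k) = 2 + r * n := by
  haveI : NeZero n := ⟨by omega⟩
  have hcard : Nat.card (ZMod n) = n := by rw [Nat.card_eq_fintype_card, ZMod.card]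
  have hset : {S : Set (ZMod n) | DigConvex (cyclePow n k) S}
      = insert ∅ (insert Set.univ {S | ∃ a l, 1 ≤ l ∧ l ≤ r ∧ S = run n a l}) := by
    ext S
    simp only [Set.mem_setOf_eq, Set.mem_insert_iff]
    constructor
    · intro hS
      exact convex_structure hn hk hr1 hr3 hS
    · rintro (rfl | rfl | ⟨a, l, h1, h2, rfl⟩)
      · exact empty_convex n k
      · exact univ_convex n k
      · exact run_convex hn hk hr1 hr3 a h1 h2
  have hnD : nD (cyclePow n k)
      = {S : Set (ZMod n) | DigConvex (cyclePow n k) S}.ncard := by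
    rw [nD, ← Nat.card_coe_set_eq]
    rfl
  have hU : (Set.univ : Set (ZMod n)).ncard = n := by rw [Set.ncard_univ, hcard]
  have hR : ∀ l, 1 ≤ l → l ≤ r → (Set.range fun a : ZMod n => run n a l).ncard = n := by
    intro l h1 h2
    rw [← Set.image_univ, Set.ncard_image_of_injOn, Set.ncard_univ, hcard]
    intro a _ b _ h
    exact run_inj h1 (by omega) h
  have hdis : ∀ l l', 1 ≤ l → l ≤ r → 1 ≤ l' → l' ≤ r → l ≠ l' →
      Disjoint (Set.range fun a : ZMod n => run n a l)
        (Set.range fun a : ZMod n => run n a l') := by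
    intro l l' h1 h2 h1' h2' hne
    rw [Set.disjoint_left]
    rintro S ⟨a, rfl⟩ ⟨b, hb⟩
    apply hne
    have hb' : run n b l' = run n a l := hb
    rw [← ncard_run (show l < n by omega) a, ← ncard_run (show l' < n by omega) b, hb']
  have hGval : {S : Set (ZMod n) | ∃ a l, 1 ≤ l ∧ l ≤ r ∧ S = run n a l}.ncard = r * n := by
    rcases (show r = 1 ∨ r = 2 ∨ r = 3 by omega) with rfl | rfl | rfl
    · have : {S : Set (ZMod n) | ∃ a l, 1 ≤ l ∧ l ≤ 1 ∧ S = run n a l}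
          = Set.range fun a : ZMod n => run n a 1 := by
        ext S
        simp only [Set.mem_setOf_eq, Set.mem_range]
        constructor
        · rintro ⟨a, l, h1, h2, rfl⟩
          have : l = 1 := by omega
          subst this; exact ⟨a, rfl⟩
        · rintro ⟨a, rfl⟩; exact ⟨a, 1, le_rfl, le_rfl, rfl⟩
      rw [this, hR 1 le_rfl le_rfl]; ring
    · have heq : {S : Set (ZMod n) | ∃ a l, 1 ≤ l ∧ l ≤ 2 ∧ S = run n a l}
          = (Set.range fun a : ZMod n => run n a 1) ∪ (Set.range fun a : ZMod n => run n a 2) := by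
        ext S
        simp only [Set.mem_setOf_eq, Set.mem_union, Set.mem_range]
        constructor
        · rintro ⟨a, l, h1, h2, rfl⟩
          interval_cases l
          · exact Or.inl ⟨a, rfl⟩
          · exact Or.inr ⟨a, rfl⟩
        · rintro (⟨a, rfl⟩ | ⟨a, rfl⟩)
          · exact ⟨a, 1, by omega, by omega, rfl⟩
          · exact ⟨a, 2, by omega, by omega, rfl⟩
      rw [heq, Set.ncard_union_eq (hdis 1 2 (by omega) (by omega) (by omega) (by omega) (by omega)),
        hR 1 (by omega) (by omega), hR 2 (by omega) (by omega)]
      ring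
    · have heq : {S : Set (ZMod n) | ∃ a l, 1 ≤ l ∧ l ≤ 3 ∧ S = run n a l}
          = ((Set.range fun a : ZMod n => run n a 1) ∪ (Set.range fun a : ZMod n => run n a 2))
            ∪ (Set.range fun a : ZMod n => run n a 3) := by
        ext S
        simp only [Set.mem_setOf_eq, Set.mem_union, Set.mem_range]
        constructor
        · rintro ⟨a, l, h1, h2, rfl⟩
          interval_cases l
          · exact Or.inl (Or.inl ⟨a, rfl⟩)
          · exact Or.inl (Or.inr ⟨a, rfl⟩)
          · exact Or.inr ⟨a, rfl⟩
        · rintro ((⟨a, rfl⟩ | ⟨a, rfl⟩) | ⟨a, rfl⟩)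
          · exact ⟨a, 1, by omega, by omega, rfl⟩
          · exact ⟨a, 2, by omega, by omega, rfl⟩
          · exact ⟨a, 3, by omega, by omega, rfl⟩
      have hd12 := hdis 1 2 (by omega) (by omega) (by omega) (by omega) (by omega)
      have hd3 : Disjoint
          ((Set.range fun a : ZMod n => run n a 1) ∪ (Set.range fun a : ZMod n => run n a 2))
          (Set.range fun a : ZMod n => run n a 3) :=
        Set.disjoint_union_left.2
          ⟨hdis 1 3 (by omega) (by omega) (by omega) (by omega) (by omega),
           hdis 2 3 (by omega) (by omega) (by omega) (by omega) (by omega)⟩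
      rw [heq, Set.ncard_union_eq hd3, Set.ncard_union_eq hd12,
        hR 1 (by omega) (by omega), hR 2 (by omega) (by omega), hR 3 (by omega) (by omega)]
      ring
  have hGne : ∀ S ∈ {S : Set (ZMod n) | ∃ a l, 1 ≤ l ∧ l ≤ r ∧ S = run n a l},
      S.ncard ≤ r := by
    rintro S ⟨a, l, h1, h2, rfl⟩
    rw [ncard_run (by omega) a]; omega
  have hene : (∅ : Set (ZMod n)) ∉
      insert Set.univ {S : Set (ZMod n) | ∃ a l, 1 ≤ l ∧ l ≤ r ∧ S = run n a l} := by
    intro h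
    rcases h with h | h
    · have h2 := hU
      rw [← h, Set.ncard_empty] at h2
      omega
    · obtain ⟨a, l, h1, h2, he⟩ := h
      have hc := ncard_run (show l < n by omega) a
      rw [← he, Set.ncard_empty] at hc
      omega
  have hune : (Set.univ : Set (ZMod n)) ∉
      {S : Set (ZMod n) | ∃ a l, 1 ≤ l ∧ l ≤ r ∧ S = run n a l} := by
    intro h
    have := hGne _ h
    rw [hU] at this
    omega
  rw [hnD, hset, Set.ncard_insert_of_notMem hene, Set.ncard_insert_of_notMem hune, hGval]
  omega

end NDProof

/-- For `k ≥ 1` and `2k+2 ≤ j ≤ 2k+4`, `n_D(C_j^k) = 2 + j(j - 2k - 1)`. -/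
theorem nD_cyclePow_medium (k : ℕ) (hk : 1 ≤ k) :
    ∀ j : ℕ, 2 * k + 2 ≤ j → j ≤ 2 * k + 4 →
      nD (cyclePow j k) = 2 + j * (j - 2 * k - 1) := by
  intro j h1 h2
  rcases (show j = 2*k+2 ∨ j = 2*k+3 ∨ j = 2*k+4 by omega) with rfl | rfl | rfl
  · rw [NDProof.nD_eq (r := 1) (by ring) hk (by norm_num) (by norm_num),
      show 2*k+2 - 2*k - 1 = 1 from by omega]
    ring
  · rw [NDProof.nD_eq (r := 2) (by ring) hk (by norm_num) (by norm_num),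
      show 2*k+3 - 2*k - 1 = 2 from by omega]
    ring
  · rw [NDProof.nD_eq (r := 3) (by ring) hk (by norm_num) (by norm_num),
      show 2*k+4 - 2*k - 1 = 3 from by omega]
    ring
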